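/- arXiv:1803.09186 — 2 statements merged into one kernel-verified Lean document; each statement's English description precedes it below -/
import Mathlib

section
/- Suppose the coarse-grained identification error δ = g_{0:r−1} − g̃_{0:r−1} is formed from m experiments with noise variance σ², and suppose the inputs are chosen so that S := ((Z_matᵀZ_mat)⁻¹)_{[r]} satisfies Tr(S) ≤ 4·log 2 · r^{2/max(p,2)}/m for some p ∈ [1, ∞]. Then for every η ∈ (0, 1), with probability at least 1 − η, ‖δ‖₂ ≤ 2·√(log 2 · σ²·r^{2/max(p,2)}/m)·(1 + √(2·log(1/η))). -/
/- Preliminaries: transfer functions as real rational functions, RH∞, H∞ norms,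
   System-Level Synthesis (SLS) constraints, controllers, closed-loop responses,
   coarse-grained identification, Gaussian vectors. -/

noncomputable section
open scoped Matrix BigOperators ENNReal
open MeasureTheory ProbabilityTheory Polynomial

namespace SLS

/-- Scalar transfer functions: real rational functions in `z`. -/
abbrev TF : Type := RatFunc ℝ

/-- Transfer matrices. -/
abbrev TMat (m n : ℕ) : Type := Matrix (Fin m) (Fin n) TF

/-- Embed a real matrix as a (constant) transfer matrix. -/
def rmap {m n : ℕ} (A : Matrix (Fin m) (Fin n) ℝ) : TMat m n := A.map RatFunc.C

/-- Evaluate a scalar transfer function at a complex point. -/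
def evalTF (f : TF) (z : ℂ) : ℂ :=
  (f.num.map (algebraMap ℝ ℂ)).eval z / (f.denom.map (algebraMap ℝ ℂ)).eval z

/-- Evaluate a transfer matrix at a complex point. -/
def evalMat {m n : ℕ} (F : TMat m n) (z : ℂ) : Matrix (Fin m) (Fin n) ℂ :=
  Matrix.of fun i j => evalTF (F i j) z

/-- Spectral norm (ℓ2 → ℓ2 operator norm) of a matrix over `ℝ` or `ℂ`. -/
def specNorm {𝕜 : Type} [RCLike 𝕜] {m n : ℕ} (M : Matrix (Fin m) (Fin n) 𝕜) : ℝ :=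
  ‖LinearMap.toContinuousLinearMap (Matrix.toEuclideanLin M)‖

/-- H∞ norm of a transfer matrix: sup over the unit circle of the spectral norm. -/
def hinfNorm {m n : ℕ} (F : TMat m n) : ℝ :=
  sSup {x : ℝ | ∃ z : ℂ, ‖z‖ = 1 ∧ x = specNorm (evalMat F z)}

/-- H∞ norm of a scalar transfer function. -/
def hinfNormTF (f : TF) : ℝ :=
  sSup {x : ℝ | ∃ z : ℂ, ‖z‖ = 1 ∧ x = ‖evalTF f z‖}

/-- A scalar transfer function is proper if its numerator degree does not exceed
its denominator degree. -/
def ProperTF (f : TF) : Prop := f.num.degree ≤ f.denom.degree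

/-- Strictly proper: vanishes at `z = ∞`. -/
def StrictlyProperTF (f : TF) : Prop := f.num.degree < f.denom.degree

/-- Stable: all poles lie strictly inside the open unit disk. -/
def StableTF (f : TF) : Prop :=
  ∀ z : ℂ, (f.denom.map (algebraMap ℝ ℂ)).eval z = 0 → ‖z‖ < 1

/-- Membership in RH∞ for scalar transfer functions: proper and stable. -/
def MemRHinfTF (f : TF) : Prop := ProperTF f ∧ StableTF f

/-- Membership in RH∞ for transfer matrices (entrywise). -/
def MemRHinf {m n : ℕ} (F : TMat m n) : Prop := ∀ i j, MemRHinfTF (F i j)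

/-- Strict properness of a transfer matrix (entrywise). -/
def StrictlyProper {m n : ℕ} (F : TMat m n) : Prop := ∀ i j, StrictlyProperTF (F i j)

/-- The transfer matrix `zI - A` for a real matrix `A`. -/
def zIA {n : ℕ} (A : Matrix (Fin n) (Fin n) ℝ) : TMat n n :=
  Matrix.diagonal (fun _ => (RatFunc.X : TF)) - rmap A

/-- A system response `Θ = {R, M, N, L}` for a plant with `n` states, `p` control
inputs and `q` measured outputs. -/
structure Response (n p q : ℕ) where
  R : TMat n n
  M : TMat p n
  N : TMat n q
  L : TMat p q

/-- The stability part of the SLS constraints: `R, M, N` strictly proper in RH∞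
and `L ∈ RH∞`. -/
def SLSStable {n p q : ℕ} (Θ : Response n p q) : Prop :=
  StrictlyProper Θ.R ∧ StrictlyProper Θ.M ∧ StrictlyProper Θ.N ∧
  MemRHinf Θ.R ∧ MemRHinf Θ.M ∧ MemRHinf Θ.N ∧ MemRHinf Θ.L

/-- The SLS constraints for the plant `(A, B₂, C₂)`:
`[zI − A, −B₂]·[[R, N],[M, L]] = [I, 0]`, `[[R, N],[M, L]]·[zI − A; −C₂] = [I; 0]`,
written blockwise, together with the stability conditions. -/
def SLSConstraints {n p q : ℕ} (A : Matrix (Fin n) (Fin n) ℝ)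
    (B₂ : Matrix (Fin n) (Fin p) ℝ) (C₂ : Matrix (Fin q) (Fin n) ℝ)
    (Θ : Response n p q) : Prop :=
  zIA A * Θ.R - rmap B₂ * Θ.M = 1 ∧
  zIA A * Θ.N - rmap B₂ * Θ.L = 0 ∧
  Θ.R * zIA A - Θ.N * rmap C₂ = 1 ∧
  Θ.M * zIA A - Θ.L * rmap C₂ = 0 ∧
  SLSStable Θ

/-- The robust SLS constraints with perturbations `(Δ₁, Δ₂)`: the second block
equation becomes `[[R, N],[M, L]]·[zI − A; −C₂] = [I + Δ₁; Δ₂]`. -/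
def RobustSLSConstraints {n p q : ℕ} (A : Matrix (Fin n) (Fin n) ℝ)
    (B₂ : Matrix (Fin n) (Fin p) ℝ) (C₂ : Matrix (Fin q) (Fin n) ℝ)
    (Δ₁ : TMat n n) (Δ₂ : TMat p n) (Θ : Response n p q) : Prop :=
  zIA A * Θ.R - rmap B₂ * Θ.M = 1 ∧
  zIA A * Θ.N - rmap B₂ * Θ.L = 0 ∧
  Θ.R * zIA A - Θ.N * rmap C₂ = 1 + Δ₁ ∧
  Θ.M * zIA A - Θ.L * rmap C₂ = Δ₂ ∧
  SLSStable Θ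

/-- The controller `K = L − M R⁻¹ N` induced by a system response. -/
def controller {n p q : ℕ} (Θ : Response n p q) : TMat p q :=
  Θ.L - Θ.M * Θ.R⁻¹ * Θ.N

/-- `K` achieves the closed-loop response `Θ'` on the plant `(A, B₂, C₂)`: in the
feedback loop `x = (zI − A)⁻¹(B₂u + δx)`, `y = C₂x + δy`, `u = Ky`, the transfer
matrices from `(δx, δy)` to `(x, u)` equal `[[R', N'],[M', L']]`. -/
def Achieves {n p q : ℕ} (A : Matrix (Fin n) (Fin n) ℝ)
    (B₂ : Matrix (Fin n) (Fin p) ℝ) (C₂ : Matrix (Fin q) (Fin n) ℝ)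
    (K : TMat p q) (Θ' : Response n p q) : Prop :=
  zIA A * Θ'.R = rmap B₂ * Θ'.M + 1 ∧
  zIA A * Θ'.N = rmap B₂ * Θ'.L ∧
  Θ'.M = K * rmap C₂ * Θ'.R ∧
  Θ'.L = K * rmap C₂ * Θ'.N + K

/-- `K` internally stabilizes the plant `(A, B₂, C₂)`: the four closed-loop
transfer matrices exist, `R', M', N'` are strictly proper, and all four lie in RH∞. -/
def InternallyStabilizes {n p q : ℕ} (A : Matrix (Fin n) (Fin n) ℝ)
    (B₂ : Matrix (Fin n) (Fin p) ℝ) (C₂ : Matrix (Fin q) (Fin n) ℝ)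
    (K : TMat p q) : Prop :=
  ∃ Θ' : Response n p q, Achieves A B₂ C₂ K Θ' ∧ SLSStable Θ'

/-! ### FIR SISO plants -/

/-- The down-shift matrix (ones on the subdiagonal). -/
def shiftMat (n : ℕ) : Matrix (Fin n) (Fin n) ℝ :=
  Matrix.of fun i j => if (i : ℕ) = (j : ℕ) + 1 then 1 else 0

/-- The first standard basis vector, as a column matrix. -/
def e1 (n : ℕ) : Matrix (Fin n) (Fin 1) ℝ :=
  Matrix.of fun i _ => if (i : ℕ) = 0 then 1 else 0

/-- A vector as a row matrix (`gᵀ`). -/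
def rowVec {n : ℕ} (g : Fin n → ℝ) : Matrix (Fin 1) (Fin n) ℝ :=
  Matrix.of fun _ j => g j

/-- The matrix `C₁ = [gᵀ; 0]`. -/
def C1mat {n : ℕ} (g : Fin n → ℝ) : Matrix (Fin 2) (Fin n) ℝ :=
  Matrix.of fun i j => if (i : ℕ) = 0 then g j else 0

/-- The matrix `D₁₂ = [0; 1]`. -/
def D12mat : Matrix (Fin 2) (Fin 1) ℝ :=
  Matrix.of fun i _ => if (i : ℕ) = 1 then 1 else 0

/-- Stack two scalar transfer functions into a 2×1 transfer matrix `[a; b]`. -/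
def col2 (a b : TF) : TMat 2 1 :=
  Matrix.of fun i _ => if (i : ℕ) = 0 then a else b

/-- The H∞ cost `J(g, Θ) = ‖[C₁, D₁₂]·[[R, N],[M, L]]·[B₁; D₂₁] + D₁₁‖` of a
system response for the generalized plant built from FIR coefficients `g`. -/
def cost {n nw : ℕ} (g : Fin n → ℝ) (B₁ : Matrix (Fin n) (Fin nw) ℝ)
    (D₂₁ : Matrix (Fin 1) (Fin nw) ℝ) (D₁₁ : Matrix (Fin 2) (Fin nw) ℝ)
    (Θ : Response n 1 1) : ℝ :=
  hinfNorm ((rmap (C1mat g) * Θ.R + rmap D12mat * Θ.M) * rmap B₁ +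
    (rmap (C1mat g) * Θ.N + rmap D12mat * Θ.L) * rmap D₂₁ + rmap D₁₁)

/-- The transfer matrix `[1 + g̃ᵀÑ; L̃]` and its H∞ norm. -/
def perfWeight {n : ℕ} (g : Fin n → ℝ) (Θ : Response n 1 1) : ℝ :=
  hinfNorm (col2 (1 + (rmap (rowVec g) * Θ.N) 0 0) (Θ.L 0 0))

/-- The robust SLS objective `Q(g̃, Θ̃, α) = J(g̃, Θ̃) + εα‖R̃B₁ + ÑD₂₁‖`. -/
def Qval {n nw : ℕ} (g : Fin n → ℝ) (B₁ : Matrix (Fin n) (Fin nw) ℝ)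
    (D₂₁ : Matrix (Fin 1) (Fin nw) ℝ) (D₁₁ : Matrix (Fin 2) (Fin nw) ℝ)
    (ε : ℝ) (Θ : Response n 1 1) (α : ℝ) : ℝ :=
  cost g B₁ D₂₁ D₁₁ Θ + ε * α * hinfNorm (Θ.R * rmap B₁ + Θ.N * rmap D₂₁)

/-- Feasibility for the robust SLS problem for the estimate `g̃` with uncertainty
parameter `ε`: `α > 0`, `Θ̃` satisfies the SLS constraints for `(Z, e₁, g̃ᵀ)`, and
`εα‖Ñ‖ + ‖[1 + g̃ᵀÑ; L̃]‖ ≤ α`. -/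
def RobustFeasible {n : ℕ} (g : Fin n → ℝ) (ε : ℝ) (Θ : Response n 1 1) (α : ℝ) : Prop :=
  0 < α ∧ SLSConstraints (shiftMat n) (e1 n) (rowVec g) Θ ∧
  ε * α * hinfNorm Θ.N + perfWeight g Θ ≤ α

/-- `(Θ̃, α)` is a minimizer of the robust SLS problem for `g̃`. -/
def RobustOptimal {n nw : ℕ} (g : Fin n → ℝ) (B₁ : Matrix (Fin n) (Fin nw) ℝ)
    (D₂₁ : Matrix (Fin 1) (Fin nw) ℝ) (D₁₁ : Matrix (Fin 2) (Fin nw) ℝ)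
    (ε : ℝ) (Θ : Response n 1 1) (α : ℝ) : Prop :=
  RobustFeasible g ε Θ α ∧
  ∀ Θ' α', RobustFeasible g ε Θ' α' → Qval g B₁ D₂₁ D₁₁ ε Θ α ≤ Qval g B₁ D₂₁ D₁₁ ε Θ' α'

/-- `Θ₀` is a minimizer of `J(g, ·)` over responses satisfying the SLS constraints
for the plant `(Z, e₁, gᵀ)`. -/
def OptimalResponse {n nw : ℕ} (g : Fin n → ℝ) (B₁ : Matrix (Fin n) (Fin nw) ℝ)
    (D₂₁ : Matrix (Fin 1) (Fin nw) ℝ) (D₁₁ : Matrix (Fin 2) (Fin nw) ℝ)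
    (Θ : Response n 1 1) : Prop :=
  SLSConstraints (shiftMat n) (e1 n) (rowVec g) Θ ∧
  ∀ Θ', SLSConstraints (shiftMat n) (e1 n) (rowVec g) Θ' →
    cost g B₁ D₂₁ D₁₁ Θ ≤ cost g B₁ D₂₁ D₁₁ Θ'

/-- The FIR transfer function `G(z) = Σ_{t=1}^{r−1} g_t z^{−t}` for
`g = (g₁, …, g_{r−1})`. -/
def firTF {n : ℕ} (g : Fin n → ℝ) : TF :=
  ∑ t : Fin n, RatFunc.C (g t) * (RatFunc.X)⁻¹ ^ ((t : ℕ) + 1)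

/-- The FIR transfer function `G(z) = Σ_{k=0}^{T−1} g_k z^{−k}` for a full
impulse-response vector `g_{0:T−1}`. -/
def firTF0 {T : ℕ} (g : Fin T → ℝ) : TF :=
  ∑ k : Fin T, RatFunc.C (g k) * (RatFunc.X)⁻¹ ^ (k : ℕ)

/-! ### Coarse-grained identification -/

/-- Euclidean (ℓ2) norm of a finite real vector. -/
def euclNorm {r : ℕ} (x : Fin r → ℝ) : ℝ := Real.sqrt (∑ i, x i ^ 2)

/-- ℓp norm of a finite real vector, `p ∈ [1, ∞]`. -/
def lpNorm {T : ℕ} (p : ℝ≥0∞) (x : Fin T → ℝ) : ℝ :=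
  if p = ∞ then ⨆ i, |x i| else (∑ i, |x i| ^ p.toReal) ^ (1 / p.toReal)

/-- `r^{2/max(p,2)}` as a real number. -/
def rExp (p : ℝ≥0∞) (r : ℕ) : ℝ := (r : ℝ) ^ ((2 / max p 2).toReal)

/-- The T×T lower-triangular Toeplitz matrix whose first column is `u`. -/
def toep {T : ℕ} (u : Fin T → ℝ) : Matrix (Fin T) (Fin T) ℝ :=
  Matrix.of fun i j =>
    if (j : ℕ) ≤ (i : ℕ) then u ⟨(i : ℕ) - (j : ℕ), lt_of_le_of_lt (Nat.sub_le _ _) i.isLt⟩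
    else 0

/-- The stacked input matrix `Z_mat = [Toep(u₁); …; Toep(u_m)]`. -/
def Zmat {T mE : ℕ} (u : Fin mE → Fin T → ℝ) : Matrix (Fin mE × Fin T) (Fin T) ℝ :=
  Matrix.of fun pr j => toep (u pr.1) pr.2 j

/-- `Z_matᵀ Z_mat`. -/
def ZtZ {T mE : ℕ} (u : Fin mE → Fin T → ℝ) : Matrix (Fin T) (Fin T) ℝ :=
  (Zmat u)ᵀ * Zmat u

/-- The least-squares estimate `g̃_{0:T−1} = (Z_matᵀZ_mat)⁻¹Z_matᵀ(y₁; …; y_m)`. -/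
def lsEst {T mE : ℕ} (u : Fin mE → Fin T → ℝ) (y : Fin mE → Fin T → ℝ) : Fin T → ℝ :=
  ((ZtZ u)⁻¹ * (Zmat u)ᵀ).mulVec fun pr => y pr.1 pr.2

/-- Pad the FIR coefficients `g = (g₁, …, g_{r−1})` to the impulse response
`g_{0:T−1} = (0, g₁, …, g_{r−1}, 0, …, 0)`. -/
def pad {r T : ℕ} (_ : r ≤ T) (g : Fin (r - 1) → ℝ) : Fin T → ℝ := fun k =>
  if hk : 1 ≤ (k : ℕ) ∧ (k : ℕ) < r then g ⟨(k : ℕ) - 1, by omega⟩ else 0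

/-- The estimated FIR coefficients `g̃ = (g̃₁, …, g̃_{r−1})` from coarse-grained
identification with true coefficients `g` and additive noise on the outputs. -/
def coarseEst {r T mE : ℕ} (hrT : r ≤ T) (u : Fin mE → Fin T → ℝ)
    (g : Fin (r - 1) → ℝ) (noise : Fin mE → Fin T → ℝ) : Fin (r - 1) → ℝ :=
  fun i =>
    lsEst u (fun k => (toep (u k)).mulVec (pad hrT g) + noise k)
      ⟨(i : ℕ) + 1, by have := i.isLt; omega⟩

/-! ### Gaussian random vectors -/

/-- The standard Gaussian measure on `Fin r → ℝ` (i.i.d. `N(0,1)` coordinates). -/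
def stdGaussianPi (r : ℕ) : Measure (Fin r → ℝ) :=
  Measure.pi fun _ => gaussianReal 0 1

/-- `δ` is a centered Gaussian random vector with covariance `Cov`: its law is the
pushforward of the standard Gaussian under some `A` with `AAᵀ = Cov`. -/
def IsCenteredGaussianVec {Ω : Type} [MeasurableSpace Ω] (P : Measure Ω) {r : ℕ}
    (δ : Ω → Fin r → ℝ) (Cov : Matrix (Fin r) (Fin r) ℝ) : Prop :=
  ∃ A : Matrix (Fin r) (Fin r) ℝ, A * Aᵀ = Cov ∧
    Measure.map δ P = Measure.map (fun x => A.mulVec x) (stdGaussianPi r)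

/-- The law of i.i.d. `N(0, σ²)` noise across `mE` experiments of length `T`. -/
def iidGaussianLaw (mE T : ℕ) (σ2 : ℝ) : Measure (Fin mE → Fin T → ℝ) :=
  Measure.pi fun _ => Measure.pi fun _ => gaussianReal 0 σ2.toNNReal


/-- Scalar multiplication of a transfer matrix by a scalar transfer function. -/
def sMulTF {m n : ℕ} (c : TF) (M : TMat m n) : TMat m n := Matrix.of fun i j => c * M i j

/-- The perturbed response `Θ̂` with `R̂ = (I+Δ₁)⁻¹R̃`, `M̂ = M̃ − Δ₂(I+Δ₁)⁻¹R̃`,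
`N̂ = (I+Δ₁)⁻¹Ñ`, `L̂ = L̃ − Δ₂(I+Δ₁)⁻¹Ñ` (with the rational matrix inverse). -/
def deltaPerturb {n p q : ℕ} (Δ₁ : TMat n n) (Δ₂ : TMat p n) (Θ : Response n p q) :
    Response n p q where
  R := (1 + Δ₁)⁻¹ * Θ.R
  M := Θ.M - Δ₂ * ((1 + Δ₁)⁻¹ * Θ.R)
  N := (1 + Δ₁)⁻¹ * Θ.N
  L := Θ.L - Δ₂ * ((1 + Δ₁)⁻¹ * Θ.N)

/-- The Sherman–Morrison form of the perturbed response in the FIR SISO case: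
`[[R̂, N̂],[M̂, L̂]] = [[R̃, Ñ],[M̃, L̃]] + (1 − δᵀÑ)⁻¹·[Ñδᵀ; L̃δᵀ]·[R̃, Ñ]`. -/
def smPerturb {n : ℕ} (δ : Fin n → ℝ) (Θ : Response n 1 1) : Response n 1 1 where
  R := Θ.R + sMulTF (1 - (rmap (rowVec δ) * Θ.N) 0 0)⁻¹ (Θ.N * rmap (rowVec δ) * Θ.R)
  M := Θ.M + sMulTF (1 - (rmap (rowVec δ) * Θ.N) 0 0)⁻¹ (Θ.L * rmap (rowVec δ) * Θ.R)
  N := Θ.N + sMulTF (1 - (rmap (rowVec δ) * Θ.N) 0 0)⁻¹ (Θ.N * rmap (rowVec δ) * Θ.N)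
  L := Θ.L + sMulTF (1 - (rmap (rowVec δ) * Θ.N) 0 0)⁻¹ (Θ.L * rmap (rowVec δ) * Θ.N)

/-- The block-diagonal matrix with `m` copies of `Toep(g)` on the diagonal
(the action of `Toep(g)` on the stacked process noise of `m` experiments). -/
def bigToep {T mE : ℕ} (g : Fin T → ℝ) : Matrix (Fin mE × Fin T) (Fin mE × Fin T) ℝ :=
  Matrix.of fun pr qr => if pr.1 = qr.1 then toep g pr.2 qr.2 else 0

end SLS

open SLS MeasureTheory

/-! With `W = (Z_matᵀZ_mat)⁻¹Z_matᵀ`, the error is `δ = -W ξ` restricted to the first `r`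
coordinates, so each `δᵢ` is a centred Gaussian of variance `σ² Sᵢᵢ`, and `σ² Tr(S) ≤ 4s` for
`s = log 2 · σ² r^{2/max(p,2)} / m`. The coordinates of `δ` are not independent, but Jensen's
inequality for `exp` with weights `Sᵢᵢ / Tr(S)` still gives `E exp(λ‖δ‖²) ≤ (1 - 2λσ² Tr S)^{-1/2}`.
A Chernoff bound with `8λs = 1 - (1 + c)⁻²` then yields
`P(‖δ‖ > 2√s (1 + c)) ≤ (1 + c) e^{-c - c²/2} ≤ e^{-c²/2}`, which is `η` for `c = √(2 log(1/η))`. -/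

open scoped NNReal

section GaussianLaws

open Complex in
lemma map_pi_sum_eq_gaussianReal {ι : Type*} [Fintype ι] {E : ι → Type*}
    [∀ i, MeasurableSpace (E i)] {μ : ∀ i, Measure (E i)} [∀ i, IsProbabilityMeasure (μ i)]
    {L : ∀ i, E i → ℝ} (hL : ∀ i, Measurable (L i)) {m : ι → ℝ} {v : ι → ℝ≥0}
    (h : ∀ i, (μ i).map (L i) = gaussianReal (m i) (v i)) :
    (Measure.pi μ).map (fun x => ∑ i, L i (x i)) = gaussianReal (∑ i, m i) (∑ i, v i) := by
  have hmeas : Measurable fun x : ∀ i, E i => ∑ i, L i (x i) := by fun_prop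
  refine Measure.ext_of_charFun (funext fun t => ?_)
  have hfactor : ∀ i, ∫ y, cexp (t * L i y * I) ∂μ i = cexp (t * m i * I - v i * t ^ 2 / 2) := by
    intro i
    rw [← charFun_gaussianReal, ← h i, charFun_apply_real,
      integral_map (hL i).aemeasurable (by fun_prop)]
  rw [charFun_apply_real, integral_map hmeas.aemeasurable (by fun_prop), charFun_gaussianReal]
  simp only [ofReal_sum, Finset.mul_sum, Finset.sum_mul, exp_sum]
  rw [integral_fintype_prod_eq_prod (fun i y => cexp (t * L i y * I))]
  simp only [hfactor, ← exp_sum]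
  congr 1
  push_cast
  rw [Finset.sum_sub_distrib, Finset.sum_mul, Finset.sum_div]

lemma gaussianReal_zero_map_const_mul (V : ℝ≥0) (c : ℝ) :
    (gaussianReal 0 V).map (c * ·) = gaussianReal 0 (‖c‖₊ ^ 2 * V) := by
  rw [gaussianReal_map_const_mul, mul_zero]
  congr 2
  ext
  simp

lemma pi_gaussianReal_map_sum_mul {ι : Type*} [Fintype ι] (V : ℝ≥0) (a : ι → ℝ) :
    (Measure.pi fun _ : ι => gaussianReal 0 V).map (fun x => ∑ i, a i * x i) =
      gaussianReal 0 (∑ i, ‖a i‖₊ ^ 2 * V) := by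
  simpa using map_pi_sum_eq_gaussianReal (fun i => measurable_const_mul (a i))
    (fun i => gaussianReal_zero_map_const_mul V (a i))

instance (mE T : ℕ) (σ2 : ℝ) : IsProbabilityMeasure (iidGaussianLaw mE T σ2) := by
  unfold iidGaussianLaw
  infer_instance

lemma iidGaussianLaw_map_sum_mul (mE T : ℕ) (σ2 : ℝ) (a : Fin mE → Fin T → ℝ) :
    (iidGaussianLaw mE T σ2).map (fun x => ∑ k, ∑ t, a k t * x k t) =
      gaussianReal 0 (∑ k, ∑ t, ‖a k t‖₊ ^ 2 * σ2.toNNReal) := by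
  simpa [iidGaussianLaw] using map_pi_sum_eq_gaussianReal (fun k => by fun_prop)
    (fun k => pi_gaussianReal_map_sum_mul σ2.toNNReal (a k))

lemma lintegral_exp_mul_sq_gaussianReal {v : ℝ≥0} {β : ℝ} (h : 2 * β * v < 1) :
    ∫⁻ x, ENNReal.ofReal (Real.exp (β * x ^ 2)) ∂gaussianReal 0 v =
      ENNReal.ofReal (√(1 - 2 * β * v))⁻¹ := by
  rcases eq_or_ne v 0 with rfl | hv
  · simp [gaussianReal_zero_var]
  have hv' : (0 : ℝ) < v := by positivity
  set a : ℝ := (1 - 2 * β * v) / (2 * v) with ha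
  have ha0 : 0 < a := div_pos (by linarith) (by positivity)
  have hdens : ∀ x : ℝ, gaussianPDFReal 0 v x * Real.exp (β * x ^ 2) =
      (√(2 * Real.pi * v))⁻¹ * Real.exp (-a * x ^ 2) := by
    intro x
    rw [gaussianPDFReal, mul_assoc, ← Real.exp_add]
    congr 2
    rw [ha]
    field_simp
    ring
  rw [gaussianReal_of_var_ne_zero 0 hv, lintegral_withDensity_eq_lintegral_mul _
    (measurable_gaussianPDF 0 v) (by fun_prop)]
  simp only [Pi.mul_apply, gaussianPDF, ← ENNReal.ofReal_mul (gaussianPDFReal_nonneg 0 v _), hdens]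
  rw [← ofReal_integral_eq_lintegral_ofReal ((integrable_exp_neg_mul_sq ha0).const_mul _)
    (Filter.Eventually.of_forall fun x => by positivity), integral_const_mul, integral_gaussian]
  congr 1
  rw [← Real.sqrt_inv, ← Real.sqrt_inv, ← Real.sqrt_mul (by positivity), ha]
  congr 1
  field_simp

end GaussianLaws

lemma exp_mul_sum_sq_le_sum_mul_exp {ι : Type*} [Fintype ι] {w y : ι → ℝ} (hw0 : ∀ i, 0 ≤ w i)
    (hw1 : ∑ i, w i = 1) (hy : ∀ i, w i = 0 → y i = 0) (β : ℝ) :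
    Real.exp (β * ∑ i, y i ^ 2) ≤ ∑ i, w i * Real.exp (β / w i * y i ^ 2) := by
  have hsplit : β * ∑ i, y i ^ 2 = ∑ i, w i • (β / w i * y i ^ 2) := by
    rw [Finset.mul_sum]
    refine Finset.sum_congr rfl fun i _ => ?_
    rcases eq_or_ne (w i) 0 with hwi | hwi
    · simp [hy i hwi]
    · rw [smul_eq_mul]
      field_simp
  rw [hsplit]
  exact convexOn_exp.map_sum_le (fun i _ => hw0 i) hw1 fun i _ => Set.mem_univ _

section ChiSquare

variable {α ι : Type*} [MeasurableSpace α] [Fintype ι] {μ : Measure α}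
  {Y : ι → α → ℝ} {v : ι → ℝ≥0}

lemma aemeasurable_of_map_eq_gaussianReal {X : α → ℝ} {m : ℝ} {w : ℝ≥0}
    (hX : μ.map X = gaussianReal m w) : AEMeasurable X μ :=
  aemeasurable_of_map_neZero (by rw [hX]; infer_instance)

lemma ae_eq_zero_of_map_eq_gaussianReal_zero {X : α → ℝ} (hX : μ.map X = gaussianReal 0 0) :
    X =ᵐ[μ] 0 := by
  have h0 : ∀ᵐ y ∂μ.map X, y = 0 := by
    rw [hX, gaussianReal_zero_var]
    exact ae_eq_dirac id
  exact ae_of_ae_map (aemeasurable_of_map_eq_gaussianReal hX) h0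

lemma ae_forall_eq_zero_of_map_eq_gaussianReal (hY : ∀ i, μ.map (Y i) = gaussianReal 0 (v i)) :
    ∀ᵐ x ∂μ, ∀ i, v i = 0 → Y i x = 0 := by
  refine ae_all_iff.2 fun i => ?_
  rcases eq_or_ne (v i) 0 with hvi | hvi
  · filter_upwards [ae_eq_zero_of_map_eq_gaussianReal_zero (hvi ▸ hY i)] with x hx
    exact fun _ => hx
  · exact Filter.Eventually.of_forall fun x h => absurd h hvi

lemma lintegral_exp_mul_sq_of_map_eq_gaussianReal {X : α → ℝ} {w : ℝ≥0}
    (hX : μ.map X = gaussianReal 0 w) {β : ℝ} (h : 2 * β * w < 1) :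
    ∫⁻ x, ENNReal.ofReal (Real.exp (β * X x ^ 2)) ∂μ = ENNReal.ofReal (√(1 - 2 * β * w))⁻¹ := by
  rw [← lintegral_exp_mul_sq_gaussianReal h, ← hX,
    lintegral_map' (by fun_prop) (aemeasurable_of_map_eq_gaussianReal hX)]

lemma lintegral_exp_mul_sum_sq_le [IsProbabilityMeasure μ]
    (hY : ∀ i, μ.map (Y i) = gaussianReal 0 (v i)) {β : ℝ} (h : 2 * β * ∑ i, v i < 1) :
    ∫⁻ x, ENNReal.ofReal (Real.exp (β * ∑ i, Y i x ^ 2)) ∂μ ≤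
      ENNReal.ofReal (√(1 - 2 * β * ∑ i, v i))⁻¹ := by
  set V : ℝ≥0 := ∑ i, v i
  have hYm : ∀ i, AEMeasurable (Y i) μ := fun i => aemeasurable_of_map_eq_gaussianReal (hY i)
  have hzero := ae_forall_eq_zero_of_map_eq_gaussianReal hY
  rcases eq_or_ne V 0 with hV | hV
  · have hv : ∀ i, v i = 0 := fun i => Finset.sum_eq_zero_iff.1 hV i (Finset.mem_univ i)
    have hone : ∀ᵐ x ∂μ, ENNReal.ofReal (Real.exp (β * ∑ i, Y i x ^ 2)) = 1 :=
      hzero.mono fun x hx => by simp [hx _ (hv _)]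
    simp [lintegral_congr_ae hone, hV]
  set w : ι → ℝ := fun i => v i / V
  have hw0 : ∀ i, 0 ≤ w i := fun i => by positivity
  have hw1 : ∑ i, w i = 1 := by
    rw [← Finset.sum_div, ← NNReal.coe_sum, div_self (NNReal.coe_ne_zero.2 hV)]
  have hjensen : ∀ᵐ x ∂μ, ENNReal.ofReal (Real.exp (β * ∑ i, Y i x ^ 2)) ≤
      ∑ i, ENNReal.ofReal (w i) * ENNReal.ofReal (Real.exp (β / w i * Y i x ^ 2)) := by
    filter_upwards [hzero] with x hx
    simp_rw [← ENNReal.ofReal_mul (hw0 _)]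
    rw [← ENNReal.ofReal_sum_of_nonneg fun i _ => by positivity]
    exact ENNReal.ofReal_le_ofReal <| exp_mul_sum_sq_le_sum_mul_exp hw0 hw1
      (fun i hwi => hx i (by simpa [w, hV] using hwi)) β
  have hfactor : ∀ i, ENNReal.ofReal (w i) *
      ∫⁻ x, ENNReal.ofReal (Real.exp (β / w i * Y i x ^ 2)) ∂μ =
      ENNReal.ofReal (w i) * ENNReal.ofReal (√(1 - 2 * β * V))⁻¹ := by
    intro i
    rcases eq_or_ne (w i) 0 with hwi | hwi
    · simp [hwi]
    have hvi : (v i : ℝ) ≠ 0 := fun h0 => hwi (by simp [w, h0])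
    have hvw : β / w i * v i = β * V := by
      simp only [w]
      field_simp
    rw [lintegral_exp_mul_sq_of_map_eq_gaussianReal (hY i)
      (by rw [mul_assoc, hvw, ← mul_assoc]; exact h), mul_assoc, hvw, ← mul_assoc]
  calc ∫⁻ x, ENNReal.ofReal (Real.exp (β * ∑ i, Y i x ^ 2)) ∂μ
      ≤ ∫⁻ x, ∑ i, ENNReal.ofReal (w i) * ENNReal.ofReal (Real.exp (β / w i * Y i x ^ 2)) ∂μ :=
        lintegral_mono_ae hjensen
    _ = ∑ i, ENNReal.ofReal (w i) * ENNReal.ofReal (√(1 - 2 * β * V))⁻¹ := by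
        rw [lintegral_finsetSum' _ fun i _ => by have := hYm i; fun_prop]
        refine Finset.sum_congr rfl fun i _ => ?_
        rw [lintegral_const_mul'' _ (by have := hYm i; fun_prop), hfactor i]
    _ = ENNReal.ofReal (√(1 - 2 * β * V))⁻¹ := by
        rw [← Finset.sum_mul, ← ENNReal.ofReal_sum_of_nonneg fun i _ => hw0 i, hw1,
          ENNReal.ofReal_one, one_mul]

lemma measure_le_sum_sq_le [IsProbabilityMeasure μ]
    (hY : ∀ i, μ.map (Y i) = gaussianReal 0 (v i)) {S β : ℝ} (hS : (↑(∑ i, v i) : ℝ) ≤ S)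
    (hβ : 0 ≤ β) (h : 2 * β * S < 1) (b : ℝ) :
    μ {x | b ≤ ∑ i, Y i x ^ 2} ≤ ENNReal.ofReal ((√(1 - 2 * β * S))⁻¹ * Real.exp (-(β * b))) := by
  have hV : 2 * β * ↑(∑ i, v i) ≤ 2 * β * S := by gcongr
  have hmgf : ∫⁻ x, ENNReal.ofReal (Real.exp (β * ∑ i, Y i x ^ 2)) ∂μ ≤
      ENNReal.ofReal (√(1 - 2 * β * S))⁻¹ :=
    (lintegral_exp_mul_sum_sq_le hY (hV.trans_lt h)).trans <| ENNReal.ofReal_le_ofReal <|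
      inv_anti₀ (Real.sqrt_pos.2 (by linarith)) (Real.sqrt_le_sqrt (by linarith))
  have hYm : ∀ i, AEMeasurable (Y i) μ := fun i => aemeasurable_of_map_eq_gaussianReal (hY i)
  calc μ {x | b ≤ ∑ i, Y i x ^ 2}
      ≤ μ {x | ENNReal.ofReal (Real.exp (β * b)) ≤
          ENNReal.ofReal (Real.exp (β * ∑ i, Y i x ^ 2))} :=
        measure_mono fun x hx => ENNReal.ofReal_le_ofReal (Real.exp_le_exp.2 (by gcongr; exact hx))
    _ ≤ (∫⁻ x, ENNReal.ofReal (Real.exp (β * ∑ i, Y i x ^ 2)) ∂μ) /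
          ENNReal.ofReal (Real.exp (β * b)) :=
        meas_ge_le_lintegral_div (by fun_prop) (by simp [Real.exp_pos]) ENNReal.ofReal_ne_top
    _ ≤ ENNReal.ofReal (√(1 - 2 * β * S))⁻¹ / ENNReal.ofReal (Real.exp (β * b)) := by gcongr
    _ = ENNReal.ofReal ((√(1 - 2 * β * S))⁻¹ * Real.exp (-(β * b))) := by
        rw [← ENNReal.ofReal_div_of_pos (Real.exp_pos _), Real.exp_neg, div_eq_mul_inv]

lemma measure_lt_sqrt_sum_sq_le [IsProbabilityMeasure μ]
    (hY : ∀ i, μ.map (Y i) = gaussianReal 0 (v i)) {S c : ℝ} (hS : (↑(∑ i, v i) : ℝ) ≤ S)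
    (hc : 0 ≤ c) :
    μ {x | √S * (1 + c) < √(∑ i, Y i x ^ 2)} ≤ ENNReal.ofReal (Real.exp (-(c ^ 2 / 2))) := by
  rcases le_or_gt S 0 with hS0 | hS0
  · have hv : ∀ i, v i = 0 := fun i => Finset.sum_eq_zero_iff.1
      (by exact_mod_cast le_antisymm (hS.trans hS0) (by positivity)) i (Finset.mem_univ i)
    refine (le_of_eq (measure_eq_zero_iff_ae_notMem.2 ?_)).trans zero_le
    filter_upwards [ae_forall_eq_zero_of_map_eq_gaussianReal hY] with x hx
    simp [hx _ (hv _), Real.sqrt_eq_zero'.2 hS0]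
  set t := 1 + c
  have ht : 1 ≤ t := by linarith
  -- chosen so that `(1 - 2βS)^{-1/2} = t` and `β S t² = c + c²/2`
  set β := (1 - (t ^ 2)⁻¹) / (2 * S)
  have hβ : 0 ≤ β := div_nonneg (by nlinarith [inv_le_one_of_one_le₀ (one_le_pow₀ ht (n := 2))])
    (by positivity)
  have h2βS : 2 * β * S = 1 - (t ^ 2)⁻¹ := by simp only [β]; field_simp
  calc μ {x | √S * t < √(∑ i, Y i x ^ 2)}
      ≤ μ {x | S * t ^ 2 ≤ ∑ i, Y i x ^ 2} := measure_mono fun x hx => by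
        have := (Real.lt_sqrt (by positivity)).1 hx
        show S * t ^ 2 ≤ _
        nlinarith [Real.sq_sqrt hS0.le]
    _ ≤ ENNReal.ofReal ((√(1 - 2 * β * S))⁻¹ * Real.exp (-(β * (S * t ^ 2)))) :=
      measure_le_sum_sq_le hY hS hβ
        (by rw [h2βS]; linarith [inv_pos.2 (by positivity : 0 < t ^ 2)]) _
    _ ≤ ENNReal.ofReal (Real.exp (-(c ^ 2 / 2))) := by
      apply ENNReal.ofReal_le_ofReal
      have hexp : β * (S * t ^ 2) = c + c ^ 2 / 2 := by simp only [β, t]; field_simp; ring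
      rw [show 1 - 2 * β * S = (t ^ 2)⁻¹ by linarith, hexp, Real.sqrt_inv,
        Real.sqrt_sq (by positivity), inv_inv]
      calc t * Real.exp (-(c + c ^ 2 / 2)) ≤ Real.exp c * Real.exp (-(c + c ^ 2 / 2)) := by
            gcongr; linarith [Real.add_one_le_exp c]
        _ = Real.exp (-(c ^ 2 / 2)) := by rw [← Real.exp_add]; ring_nf

lemma one_sub_exp_le_measure_sqrt_sum_sq_le [IsProbabilityMeasure μ]
    (hY : ∀ i, μ.map (Y i) = gaussianReal 0 (v i)) {S c : ℝ} (hS : (↑(∑ i, v i) : ℝ) ≤ S)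
    (hc : 0 ≤ c) :
    ENNReal.ofReal (1 - Real.exp (-(c ^ 2 / 2))) ≤ μ {x | √(∑ i, Y i x ^ 2) ≤ √S * (1 + c)} := by
  have hYm : ∀ i, AEMeasurable (Y i) μ := fun i => aemeasurable_of_map_eq_gaussianReal (hY i)
  have hnull : NullMeasurableSet {x | √(∑ i, Y i x ^ 2) ≤ √S * (1 + c)} μ :=
    nullMeasurableSet_le (by fun_prop) aemeasurable_const
  have hcompl : {x | √(∑ i, Y i x ^ 2) ≤ √S * (1 + c)}ᶜ =
      {x | √S * (1 + c) < √(∑ i, Y i x ^ 2)} := by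
    ext x
    simp [not_le]
  rw [ENNReal.ofReal_sub _ (Real.exp_pos _).le, ENNReal.ofReal_one,
    ← compl_compl {x | √(∑ i, Y i x ^ 2) ≤ √S * (1 + c)}, prob_compl_eq_one_sub₀ hnull.compl,
    hcompl]
  exact tsub_le_tsub_left (measure_lt_sqrt_sum_sq_le hY hS hc) 1

end ChiSquare

namespace SLS

variable {T mE : ℕ} {u : Fin mE → Fin T → ℝ}

def Zpinv (u : Fin mE → Fin T → ℝ) : Matrix (Fin T) (Fin mE × Fin T) ℝ :=
  (ZtZ u)⁻¹ * (Zmat u)ᵀ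

lemma Zpinv_mul_Zmat (hinv : IsUnit (ZtZ u).det) : Zpinv u * Zmat u = 1 := by
  rw [Zpinv, Matrix.mul_assoc]
  exact Matrix.nonsing_inv_mul _ hinv

lemma Zpinv_mul_transpose (hinv : IsUnit (ZtZ u).det) : Zpinv u * (Zpinv u)ᵀ = (ZtZ u)⁻¹ := by
  have hsymm : (ZtZ u)ᵀ = ZtZ u := by
    rw [ZtZ, Matrix.transpose_mul, Matrix.transpose_transpose]
  rw [Zpinv, Matrix.transpose_mul, Matrix.transpose_transpose, Matrix.transpose_nonsing_inv, hsymm,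
    ← Matrix.mul_assoc, ← Zpinv, Zpinv_mul_Zmat hinv, Matrix.one_mul]

lemma sum_sq_Zpinv (hinv : IsUnit (ZtZ u).det) (j : Fin T) :
    ∑ k, ∑ t, Zpinv u j (k, t) ^ 2 = (ZtZ u)⁻¹ j j := by
  rw [← Zpinv_mul_transpose hinv, Matrix.mul_apply, Fintype.sum_prod_type]
  simp [sq]

lemma trace_submatrix_inv_ZtZ (hinv : IsUnit (ZtZ u).det) {r : ℕ} (f : Fin r → Fin T) :
    (((ZtZ u)⁻¹).submatrix f f).trace = ∑ i, ∑ k, ∑ t, Zpinv u (f i) (k, t) ^ 2 := by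
  simp [Matrix.trace, sum_sq_Zpinv hinv]

lemma coe_sum_nnnorm_Zpinv_sq_mul (hinv : IsUnit (ZtZ u).det) {r : ℕ} (f : Fin r → Fin T)
    (σ : ℝ) : (↑(∑ i, ∑ k, ∑ t, ‖Zpinv u (f i) (k, t)‖₊ ^ 2 * (σ ^ 2).toNNReal) : ℝ) =
      σ ^ 2 * (((ZtZ u)⁻¹).submatrix f f).trace := by
  push_cast [Real.coe_toNNReal _ (sq_nonneg σ), trace_submatrix_inv_ZtZ hinv]
  simp only [Real.norm_eq_abs, sq_abs, Finset.mul_sum, mul_comm]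

lemma lsEst_toep_mulVec_add (hinv : IsUnit (ZtZ u).det) (g : Fin T → ℝ)
    (x : Fin mE → Fin T → ℝ) :
    lsEst u (fun k => toep (u k) *ᵥ g + x k) = g + Zpinv u *ᵥ Function.uncurry x := by
  change Zpinv u *ᵥ (Zmat u *ᵥ g + Function.uncurry x) = _
  rw [Matrix.mulVec_add, Matrix.mulVec_mulVec, Zpinv_mul_Zmat hinv, Matrix.one_mulVec]

lemma euclNorm_sub_lsEst (hinv : IsUnit (ZtZ u).det) {r : ℕ} (f : Fin r → Fin T)
    (g : Fin T → ℝ) (x : Fin mE → Fin T → ℝ) :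
    euclNorm (fun i => g (f i) - lsEst u (fun k => toep (u k) *ᵥ g + x k) (f i)) =
      √(∑ i, (∑ k, ∑ t, Zpinv u (f i) (k, t) * x k t) ^ 2) := by
  simp [euclNorm, lsEst_toep_mulVec_add hinv, Matrix.mulVec, dotProduct, Fintype.sum_prod_type]

end SLS

theorem statement_12_general {Ω : Type} [MeasurableSpace Ω] (P : Measure Ω)
    (T mE r : ℕ) (hrT : r ≤ T)
    (g0 : Fin T → ℝ) (u : Fin mE → Fin T → ℝ)
    (hinv : IsUnit (ZtZ u).det)
    (σ : ℝ)
    (p : ℝ≥0∞)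
    (hS : (((ZtZ u)⁻¹).submatrix (Fin.castLE hrT) (Fin.castLE hrT)).trace ≤
      4 * Real.log 2 * rExp p r / mE)
    (ξ : Ω → Fin mE → Fin T → ℝ)
    (hlaw : Measure.map ξ P = iidGaussianLaw mE T (σ ^ 2))
    (η : ℝ) (hη0 : 0 < η) (hη1 : η < 1) :
    ENNReal.ofReal (1 - η) ≤
      P {ω | euclNorm (fun i : Fin r => g0 (Fin.castLE hrT i) -
          lsEst u (fun k => (toep (u k)).mulVec g0 + ξ ω k) (Fin.castLE hrT i)) ≤
        2 * Real.sqrt (Real.log 2 * σ ^ 2 * rExp p r / mE) *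
          (1 + Real.sqrt (2 * Real.log (1 / η)))} := by
  set s := Real.log 2 * σ ^ 2 * rExp p r / mE
  set c := Real.sqrt (2 * Real.log (1 / η))
  set Y : Fin r → (Fin mE → Fin T → ℝ) → ℝ :=
    fun i x => ∑ k, ∑ t, Zpinv u (Fin.castLE hrT i) (k, t) * x k t
  have hY := fun i =>
    iidGaussianLaw_map_sum_mul mE T (σ ^ 2) (fun k t => Zpinv u (Fin.castLE hrT i) (k, t))
  have hvar : (↑(∑ i : Fin r, ∑ k, ∑ t, ‖Zpinv u (Fin.castLE hrT i) (k, t)‖₊ ^ 2 *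
      (σ ^ 2).toNNReal) : ℝ) ≤ 4 * s := by
    rw [coe_sum_nnnorm_Zpinv_sq_mul hinv,
      show 4 * s = σ ^ 2 * (4 * Real.log 2 * rExp p r / mE) by ring]
    gcongr
  have hc : Real.exp (-(c ^ 2 / 2)) = η := calc
    _ = Real.exp (Real.log η) := by
      rw [Real.sq_sqrt (by have := Real.log_nonneg (one_le_one_div hη0 hη1.le); positivity),
        one_div, Real.log_inv]
      ring_nf
    _ = η := Real.exp_log hη0
  have key := one_sub_exp_le_measure_sqrt_sum_sq_le (Y := Y) (c := c) hY hvar (Real.sqrt_nonneg _)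
  rw [hc, Real.sqrt_mul (by norm_num) s,
    show Real.sqrt 4 = 2 by rw [show (4 : ℝ) = 2 ^ 2 by norm_num, Real.sqrt_sq zero_le_two]] at key
  have hξ : AEMeasurable ξ P := aemeasurable_of_map_neZero (by rw [hlaw]; infer_instance)
  simp_rw [euclNorm_sub_lsEst hinv]
  rw [← Set.preimage_ofPred_eq (p := fun x => √(∑ i, Y i x ^ 2) ≤ 2 * √s * (1 + c)),
    ← Measure.map_apply_of_aemeasurable hξ (measurableSet_le (by fun_prop) (by fun_prop)), hlaw]
  exact key

/-- coarse-grained identification error bound: if the inputs are chosen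
so that `S := ((Z_matᵀZ_mat)⁻¹)_{[r]}` satisfies `Tr(S) ≤ 4·log 2·r^{2/max(p,2)}/m`,
then with probability at least `1 − η` the least-squares error on the first `r`
coefficients satisfies `‖δ‖₂ ≤ 2√(log 2·σ²·r^{2/max(p,2)}/m)(1 + √(2 log(1/η)))`. -/
theorem statement_12 {Ω : Type} [MeasurableSpace Ω] (P : Measure Ω)
    [IsProbabilityMeasure P] (T mE r : ℕ) (hrT : r ≤ T)
    (g0 : Fin T → ℝ) (u : Fin mE → Fin T → ℝ)
    (hinv : IsUnit (ZtZ u).det)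
    (σ : ℝ) (hσ : 0 < σ)
    (p : ℝ≥0∞) (hp : 1 ≤ p)
    (hS : (((ZtZ u)⁻¹).submatrix (Fin.castLE hrT) (Fin.castLE hrT)).trace ≤
      4 * Real.log 2 * rExp p r / mE)
    (ξ : Ω → Fin mE → Fin T → ℝ)
    (hlaw : Measure.map ξ P = iidGaussianLaw mE T (σ ^ 2))
    (η : ℝ) (hη0 : 0 < η) (hη1 : η < 1) :
    ENNReal.ofReal (1 - η) ≤
      P {ω | euclNorm (fun i : Fin r => g0 (Fin.castLE hrT i) -
          lsEst u (fun k => (toep (u k)).mulVec g0 + ξ ω k) (Fin.castLE hrT i)) ≤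
        2 * Real.sqrt (Real.log 2 * σ ^ 2 * rExp p r / mE) *
          (1 + Real.sqrt (2 * Real.log (1 / η)))} :=
  statement_12_general P T mE r hrT g0 u hinv σ p hS ξ hlaw η hη0 hη1
end
end

section
/- Let G be a stable, strictly proper FIR SISO plant with impulse-response vector g_{0:T−1} ∈ ℝ^T, and let Z_mat ∈ ℝ^{Tm×T} be the stacked input Toeplitz matrix of a coarse-grained identification experiment with Z_matᵀZ_mat invertible. Then for any σ_w, σ_ξ ≥ 0, the matrix Λ := (Z_matᵀZ_mat)⁻¹·Z_matᵀ·(σ_w²·Toep(g_{0:T−1})·Toep(g_{0:T−1})ᵀ + σ_ξ²·I)·Z_mat·(Z_matᵀZ_mat)⁻¹ satisfies Λ ⪯ (σ_w²·‖G‖² + σ_ξ²)·(Z_matᵀZ_mat)⁻¹ in the Loewner (positive semidefinite) order, where ‖G‖ is the H∞ norm of G; in particular the spectral norm of the Toeplitz matrix satisfies ‖Toep(g_{0:T−1})‖ ≤ ‖G‖. -/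
/- Preliminaries: transfer functions as real rational functions, RH∞, H∞ norms,
   System-Level Synthesis (SLS) constraints, controllers, closed-loop responses,
   coarse-grained identification, Gaussian vectors. -/

noncomputable section
open scoped Matrix BigOperators ENNReal
open MeasureTheory ProbabilityTheory Polynomial

open SLS MeasureTheory

/-!
Multiplication by `Toep(g)` sends `x` to the first `T` coefficients of the product of the
polynomials with coefficient vectors `x` and `g`, and on the unit circle the second factor is
`θ ↦ G(e^{-iθ})`. Parseval's identity therefore gives `‖Toep(g) x‖ ≤ ‖G‖ ‖x‖`. The stacked
operator `I ⊗ Toep(g)` obeys the same bound, so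
`σ_w² Toep Toepᵀ + σ_ξ² I ⪯ (σ_w² ‖G‖² + σ_ξ²) I`, and conjugating this inequality by
`Z_mat (Z_matᵀZ_mat)⁻¹` gives the bound on `Λ`.
-/

section Parseval

open Complex Polynomial Finset
open scoped Real ComplexConjugate

lemma integral_exp_intCast_mul_mul_I (n : ℤ) :
    ∫ θ in (0 : ℝ)..2 * π, exp (n * θ * I) = if n = 0 then ((2 * π : ℝ) : ℂ) else 0 := by
  split_ifs with hn
  · simp [hn]
  have hc : (n : ℂ) * I ≠ 0 := mul_ne_zero (by exact_mod_cast hn) I_ne_zero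
  simp_rw [mul_right_comm _ _ I]
  have : (n : ℂ) * I * ((2 * π : ℝ) : ℂ) = n * (2 * π * I) := by push_cast; ring
  rw [integral_exp_mul_complex hc, this, exp_int_mul_two_pi_mul_I]
  simp

lemma exp_mul_I_pow_mul_conj_pow (θ : ℝ) (k l : ℕ) :
    exp (θ * I) ^ k * conj (exp (θ * I)) ^ l = exp (((k : ℤ) - l : ℤ) * θ * I) := by
  rw [← exp_conj, ← exp_nat_mul, ← exp_nat_mul, ← exp_add]
  congr 1
  simp only [map_mul, conj_ofReal, conj_I]
  push_cast
  ring

lemma integral_norm_sq_eval_exp_mul_I (p : ℂ[X]) {N : ℕ} (hN : p.natDegree < N) :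
    ∫ θ in (0 : ℝ)..2 * π, ‖p.eval (exp (θ * I))‖ ^ 2 =
      2 * π * ∑ k ∈ range N, ‖p.coeff k‖ ^ 2 := by
  have hexpand (θ : ℝ) : ((‖p.eval (exp (θ * I))‖ ^ 2 : ℝ) : ℂ) =
      ∑ k ∈ range N, ∑ l ∈ range N,
        p.coeff k * conj (p.coeff l) * exp (((k : ℤ) - l : ℤ) * θ * I) := by
    rw [ofReal_pow, ← mul_conj', eval_eq_sum_range' hN, map_sum, sum_mul_sum]
    refine sum_congr rfl fun k _ => sum_congr rfl fun l _ => ?_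
    rw [map_mul, map_pow, ← exp_mul_I_pow_mul_conj_pow]
    ring
  have hint (k l : ℕ) : IntervalIntegrable
      (fun θ : ℝ => p.coeff k * conj (p.coeff l) * exp (((k : ℤ) - l : ℤ) * θ * I))
      volume 0 (2 * π) :=
    (by fun_prop : Continuous _).intervalIntegrable _ _
  apply ofReal_injective
  rw [← intervalIntegral.integral_ofReal]
  simp_rw [hexpand]
  rw [intervalIntegral.integral_finsetSum fun k _ =>
    (by fun_prop : Continuous _).intervalIntegrable _ _]
  simp_rw [intervalIntegral.integral_finsetSum fun l _ => hint _ l,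
    intervalIntegral.integral_const_mul, integral_exp_intCast_mul_mul_I, sub_eq_zero,
    Nat.cast_inj, mul_ite, mul_zero, sum_ite_eq]
  push_cast
  rw [mul_sum]
  refine sum_congr rfl fun k hk => ?_
  rw [if_pos hk, mul_conj']
  ring

lemma sum_norm_sq_coeff_mul_le (p q : ℂ[X]) {c : ℝ}
    (hq : ∀ θ : ℝ, ‖q.eval (exp (θ * I))‖ ≤ c) (M : ℕ) {N : ℕ} (hp : p.natDegree < N) :
    ∑ k ∈ range M, ‖(p * q).coeff k‖ ^ 2 ≤ c ^ 2 * ∑ k ∈ range N, ‖p.coeff k‖ ^ 2 := by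
  set M' := max M ((p * q).natDegree + 1)
  have hcont (r : ℂ[X]) : Continuous fun θ : ℝ => ‖r.eval (exp (θ * I))‖ ^ 2 := by fun_prop
  refine le_of_mul_le_mul_left ?_ Real.two_pi_pos
  calc 2 * π * ∑ k ∈ range M, ‖(p * q).coeff k‖ ^ 2
      ≤ 2 * π * ∑ k ∈ range M', ‖(p * q).coeff k‖ ^ 2 := by
        gcongr
        exact le_max_left _ _
    _ = ∫ θ in (0 : ℝ)..2 * π, ‖p.eval (exp (θ * I))‖ ^ 2 * ‖q.eval (exp (θ * I))‖ ^ 2 := by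
        simp_rw [← mul_pow, ← norm_mul, ← eval_mul]
        exact (integral_norm_sq_eval_exp_mul_I _ (Nat.lt_of_succ_le (le_max_right _ _))).symm
    _ ≤ ∫ θ in (0 : ℝ)..2 * π, ‖p.eval (exp (θ * I))‖ ^ 2 * c ^ 2 := by
        refine intervalIntegral.integral_mono_on Real.two_pi_pos.le
          (((hcont p).mul (hcont q)).intervalIntegrable _ _)
          (((hcont p).mul continuous_const).intervalIntegrable _ _) fun θ _ => ?_
        gcongr
        exact hq θ
    _ = 2 * π * (c ^ 2 * ∑ k ∈ range N, ‖p.coeff k‖ ^ 2) := by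
        rw [intervalIntegral.integral_mul_const, integral_norm_sq_eval_exp_mul_I p hp]
        ring

end Parseval

section FIR

open Polynomial

lemma evalTF_eq_div {f : TF} {p q : ℝ[X]} {z : ℂ}
    (hf : f = algebraMap ℝ[X] TF p / algebraMap ℝ[X] TF q)
    (hq : (q.map (algebraMap ℝ ℂ)).eval z ≠ 0) :
    evalTF f z = (p.map (algebraMap ℝ ℂ)).eval z / (q.map (algebraMap ℝ ℂ)).eval z := by
  have hq0 : q ≠ 0 := by rintro rfl; simp at hq
  obtain ⟨r, hr⟩ := (RatFunc.denom_dvd hq0).2 ⟨p, hf⟩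
  have hden : (f.denom.map (algebraMap ℝ ℂ)).eval z ≠ 0 := by
    rw [hr, Polynomial.map_mul, eval_mul] at hq
    exact left_ne_zero_of_mul hq
  have hcross := congrArg (fun s : ℝ[X] => (s.map (algebraMap ℝ ℂ)).eval z)
    ((RatFunc.num_mul_eq_mul_denom_iff hq0).2 hf)
  simp only [Polynomial.map_mul, eval_mul] at hcross
  rw [evalTF, div_eq_div_iff hden hq, hcross]

lemma firTF0_eq_div {T : ℕ} (g : Fin T → ℝ) :
    firTF0 g = algebraMap ℝ[X] TF (∑ k : Fin T, C (g k) * X ^ (T - 1 - k)) /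
      algebraMap ℝ[X] TF (X ^ (T - 1)) := by
  rw [eq_div_iff (RatFunc.algebraMap_ne_zero (pow_ne_zero _ X_ne_zero)), firTF0, Finset.sum_mul,
    map_sum]
  refine Finset.sum_congr rfl fun k _ => ?_
  have hk : (k : ℕ) ≤ T - 1 := by omega
  simp only [map_mul, map_pow, RatFunc.algebraMap_C, RatFunc.algebraMap_X]
  rw [pow_sub₀ _ RatFunc.X_ne_zero hk, inv_pow]
  ring

lemma evalTF_firTF0 {T : ℕ} (g : Fin T → ℝ) {z : ℂ} (hz : z ≠ 0) :
    evalTF (firTF0 g) z = ∑ k : Fin T, (g k : ℂ) * z⁻¹ ^ (k : ℕ) := by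
  rw [evalTF_eq_div (firTF0_eq_div g) (by simp [hz])]
  simp only [Polynomial.map_sum, Polynomial.map_mul, Polynomial.map_pow, map_C, map_X,
    eval_finsetSum, eval_mul, eval_pow, eval_C, eval_X, Complex.coe_algebraMap]
  rw [Finset.sum_div]
  refine Finset.sum_congr rfl fun k _ => ?_
  have hk : (k : ℕ) ≤ T - 1 := by omega
  rw [pow_sub₀ _ hz hk, inv_pow]
  field_simp

lemma norm_evalTF_firTF0_le_hinfNormTF {T : ℕ} (g : Fin T → ℝ) {z : ℂ} (hz : ‖z‖ = 1) :
    ‖evalTF (firTF0 g) z‖ ≤ hinfNormTF (firTF0 g) := by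
  refine le_csSup ⟨∑ k, |g k|, ?_⟩ ⟨z, hz, rfl⟩
  rintro _ ⟨w, hw, rfl⟩
  rw [evalTF_firTF0 g (norm_ne_zero_iff.1 (hw.trans_ne one_ne_zero))]
  refine (norm_sum_le _ _).trans (Finset.sum_le_sum fun k _ => ?_)
  simp [hw]

end FIR

section Toeplitz

open Polynomial Complex Finset

lemma coeff_ofFn_mul_ofFn {T : ℕ} (g x : Fin T → ℝ) (i : Fin T) :
    (ofFn T (fun k => (x k : ℂ)) * ofFn T (fun k => (g k : ℂ))).coeff i =
      ((toep g *ᵥ x) i : ℂ) := by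
  set a := ofFn T (fun k => (x k : ℂ))
  set b := ofFn T (fun k => (g k : ℂ))
  have hfilter : (range T).filter (· ≤ (i : ℕ)) = range (i + 1) := by
    ext j; simp only [mem_filter, mem_range]; omega
  calc (a * b).coeff i = ∑ j ∈ range (i + 1), a.coeff j * b.coeff (i - j) := by
        rw [coeff_mul, Nat.sum_antidiagonal_eq_sum_range_succ_mk]
    _ = ∑ j ∈ range T, if j ≤ (i : ℕ) then a.coeff j * b.coeff (i - j) else 0 := by
        rw [← sum_filter, hfilter]
    _ = ∑ j : Fin T, if (j : ℕ) ≤ i then a.coeff j * b.coeff (i - j) else 0 :=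
        (Fin.sum_univ_eq_sum_range (fun j => if j ≤ (i : ℕ) then _ else 0) T).symm
    _ = ((toep g *ᵥ x) i : ℂ) := by
        simp only [Matrix.mulVec, dotProduct, toep, Matrix.of_apply, ofReal_sum]
        refine sum_congr rfl fun j _ => ?_
        split_ifs with hji
        · simp [a, b, ofFn_coeff_eq_val_of_lt _ (show (i : ℕ) - j < T by omega), mul_comm]
        · simp

lemma sum_sq_toep_mulVec_le {T : ℕ} (g x : Fin T → ℝ) :
    ∑ i, (toep g *ᵥ x) i ^ 2 ≤ hinfNormTF (firTF0 g) ^ 2 * ∑ j, x j ^ 2 := by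
  rcases Nat.eq_zero_or_pos T with rfl | hT
  · simp
  have hsymbol (θ : ℝ) :
      ‖(ofFn T (fun k => (g k : ℂ))).eval (exp (θ * I))‖ ≤ hinfNormTF (firTF0 g) := by
    have hz : ‖(exp (θ * I))⁻¹‖ = 1 := by rw [norm_inv, norm_exp_ofReal_mul_I, inv_one]
    convert norm_evalTF_firTF0_le_hinfNormTF g hz using 2
    rw [evalTF_firTF0 g (inv_ne_zero (exp_ne_zero _)), inv_inv, ofFn_eq_sum_monomial,
      eval_finsetSum]
    simp only [eval_monomial]
  have h := sum_norm_sq_coeff_mul_le (ofFn T (fun k => (x k : ℂ))) _ hsymbol T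
    (ofFn_natDegree_lt hT _)
  rw [← Fin.sum_univ_eq_sum_range, ← Fin.sum_univ_eq_sum_range] at h
  simpa [coeff_ofFn_mul_ofFn, sq_abs] using h

lemma specNorm_toep_le_hinfNormTF {T : ℕ} (g : Fin T → ℝ) : specNorm (toep g) ≤ hinfNormTF (firTF0 g) := by
  have hc : 0 ≤ hinfNormTF (firTF0 g) :=
    (norm_nonneg _).trans (norm_evalTF_firTF0_le_hinfNormTF g (z := 1) norm_one)
  refine ContinuousLinearMap.opNorm_le_bound _ hc fun x => ?_
  refine (sq_le_sq₀ (norm_nonneg _) (by positivity)).1 ?_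
  simpa [EuclideanSpace.norm_sq_eq, mul_pow] using sum_sq_toep_mulVec_le g x

end Toeplitz

section Loewner

open Matrix
open scoped Matrix.Norms.L2Operator ComplexOrder

lemma star_dotProduct_self_eq_norm_sq {𝕜 n : Type*} [RCLike 𝕜] [Fintype n] (v : n → 𝕜) :
    star v ⬝ᵥ v = ((‖WithLp.toLp 2 v‖ ^ 2 : ℝ) : 𝕜) := by
  rw [dotProduct_comm, ← EuclideanSpace.inner_toLp_toLp, inner_self_eq_norm_sq_to_K,
    RCLike.ofReal_pow]

lemma posSemidef_sq_smul_one_sub_conjTranspose_mul_self {𝕜 m n : Type*} [RCLike 𝕜] [Fintype m]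
    [Fintype n] [DecidableEq n] {A : Matrix m n 𝕜} {c : ℝ} (hA : ‖A‖ ≤ c) :
    ((c ^ 2 : ℝ) • (1 : Matrix n n 𝕜) - Aᴴ * A).PosSemidef := by
  refine PosSemidef.of_dotProduct_mulVec_nonneg ?_ fun x => ?_
  · exact (isHermitian_one.smul (IsSelfAdjoint.all _)).sub (isHermitian_conjTranspose_mul_self A)
  have hx : ‖WithLp.toLp 2 (A *ᵥ x)‖ ≤ c * ‖WithLp.toLp 2 x‖ :=
    (A.l2_opNorm_mulVec (WithLp.toLp 2 x)).trans
      (mul_le_mul_of_nonneg_right hA (norm_nonneg _))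
  rw [sub_mulVec, smul_mulVec, one_mulVec, dotProduct_sub, dotProduct_smul, ← mulVec_mulVec,
    dotProduct_mulVec, ← star_mulVec, star_dotProduct_self_eq_norm_sq,
    star_dotProduct_self_eq_norm_sq, RCLike.real_smul_eq_coe_mul, ← RCLike.ofReal_mul,
    ← RCLike.ofReal_sub, RCLike.ofReal_nonneg, sub_nonneg, ← mul_pow]
  exact pow_le_pow_left₀ (norm_nonneg _) hx 2

end Loewner

section LeastSquares

open Matrix

lemma posSemidef_smul_inv_gram_sub_conj {R m n : Type*} [Field R] [PartialOrder R] [StarRing R]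
    [Fintype m] [Fintype n] [DecidableEq m] [DecidableEq n] {A : Matrix m n R}
    (hA : IsUnit (Aᴴ * A).det) {W : Matrix m m R} {a : R} (hW : (a • 1 - W).PosSemidef) :
    (a • (Aᴴ * A)⁻¹ - (Aᴴ * A)⁻¹ * Aᴴ * W * A * (Aᴴ * A)⁻¹).PosSemidef := by
  set S := (Aᴴ * A)⁻¹
  have hS : Sᴴ = S := by
    rw [conjTranspose_nonsing_inv, conjTranspose_mul, conjTranspose_conjTranspose]
  have hSA : S * Aᴴ * A = 1 := by rw [Matrix.mul_assoc, nonsing_inv_mul _ hA]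
  convert hW.conjTranspose_mul_mul_same (A * S) using 1
  rw [conjTranspose_mul, hS, Matrix.mul_sub, Matrix.sub_mul, Matrix.mul_smul, Matrix.mul_one,
    Matrix.smul_mul, ← Matrix.mul_assoc, hSA, Matrix.one_mul]
  simp only [Matrix.mul_assoc]

end LeastSquares

section Covariance

open Matrix
open scoped Kronecker Matrix.Norms.L2Operator

lemma bigToep_eq_one_kronecker {T mE : ℕ} (g : Fin T → ℝ) :
    bigToep (mE := mE) g = (1 : Matrix (Fin mE) (Fin mE) ℝ) ⊗ₖ toep g := by
  ext ⟨i, k⟩ ⟨j, l⟩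
  simp [bigToep, one_apply]

lemma posSemidef_sq_smul_one_sub_bigToep_mul_transpose {T mE : ℕ} (g : Fin T → ℝ) {c : ℝ}
    (hc : specNorm (toep g) ≤ c) :
    ((c ^ 2 : ℝ) • 1 - bigToep (mE := mE) g * (bigToep g)ᵀ).PosSemidef := by
  have hT := posSemidef_sq_smul_one_sub_conjTranspose_mul_self (A := (toep g)ᵀ) (c := c)
    (by rwa [← conjTranspose_eq_transpose_of_trivial, l2_opNorm_conjTranspose])
  rw [conjTranspose_eq_transpose_of_trivial, transpose_transpose] at hT
  have heq : (c ^ 2 : ℝ) • 1 - bigToep (mE := mE) g * (bigToep g)ᵀ =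
      (1 : Matrix (Fin mE) (Fin mE) ℝ) ⊗ₖ ((c ^ 2 : ℝ) • 1 - toep g * (toep g)ᵀ) := by
    rw [bigToep_eq_one_kronecker]
    ext ⟨i, k⟩ ⟨j, l⟩
    by_cases hij : i = j <;> simp [hij, mul_apply, Fintype.sum_prod_type, one_apply]
  rw [heq]
  exact PosSemidef.one.kronecker hT

end Covariance

theorem statement_18_general (T mE : ℕ) (g0 : Fin T → ℝ) (u : Fin mE → Fin T → ℝ)
    (hinv : IsUnit (ZtZ u).det) (σw σξ : ℝ) :
    ((σw ^ 2 * hinfNormTF (firTF0 g0) ^ 2 + σξ ^ 2) • (ZtZ u)⁻¹ -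
      (ZtZ u)⁻¹ * (Zmat u)ᵀ *
        (σw ^ 2 • (bigToep g0 * (bigToep g0)ᵀ) +
          σξ ^ 2 • (1 : Matrix (Fin mE × Fin T) (Fin mE × Fin T) ℝ)) *
        Zmat u * (ZtZ u)⁻¹).PosSemidef ∧
    specNorm (toep g0) ≤ hinfNormTF (firTF0 g0) := by
  set c := hinfNormTF (firTF0 g0)
  have hToep : specNorm (toep g0) ≤ c := specNorm_toep_le_hinfNormTF g0
  refine ⟨?_, hToep⟩
  have hW : ((σw ^ 2 * c ^ 2 + σξ ^ 2) • 1 -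
      (σw ^ 2 • (bigToep g0 * (bigToep g0)ᵀ) +
        σξ ^ 2 • (1 : Matrix (Fin mE × Fin T) (Fin mE × Fin T) ℝ))).PosSemidef := by
    have h := (posSemidef_sq_smul_one_sub_bigToep_mul_transpose (mE := mE) g0 hToep).smul
      (sq_nonneg σw)
    convert h using 1
    module
  simpa [ZtZ, Matrix.conjTranspose_eq_transpose_of_trivial] using
    posSemidef_smul_inv_gram_sub_conj (A := Zmat u) hinv hW

/-- for a stable, strictly proper FIR SISO plant `G` with impulse
response `g_{0:T−1}`, the covariance
`Λ = (Z_matᵀZ_mat)⁻¹Z_matᵀ(σ_w²·Toep(g)Toep(g)ᵀ + σ_ξ²·I)Z_mat(Z_matᵀZ_mat)⁻¹`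
satisfies `Λ ⪯ (σ_w²‖G‖² + σ_ξ²)·(Z_matᵀZ_mat)⁻¹` in the Loewner order; in particular
`‖Toep(g)‖ ≤ ‖G‖`. -/
theorem statement_18 (T mE : ℕ) (g0 : Fin T → ℝ) (u : Fin mE → Fin T → ℝ)
    (hstable : StableTF (firTF0 g0)) (hsp : StrictlyProperTF (firTF0 g0))
    (hinv : IsUnit (ZtZ u).det)
    (σw σξ : ℝ) (hw : 0 ≤ σw) (hξ : 0 ≤ σξ) :
    ((σw ^ 2 * hinfNormTF (firTF0 g0) ^ 2 + σξ ^ 2) • (ZtZ u)⁻¹ -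
      (ZtZ u)⁻¹ * (Zmat u)ᵀ *
        (σw ^ 2 • (bigToep g0 * (bigToep g0)ᵀ) +
          σξ ^ 2 • (1 : Matrix (Fin mE × Fin T) (Fin mE × Fin T) ℝ)) *
        Zmat u * (ZtZ u)⁻¹).PosSemidef ∧
    specNorm (toep g0) ≤ hinfNormTF (firTF0 g0) :=
  statement_18_general T mE g0 u hinv σw σξ
end
end
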